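/- If a family 𝒯 of complete L-theories satisfies RS(𝒯) = ∞, then the cardinality of Cl_E(𝒯) is at least 2^ℵ₀. -/

import Mathlib

open FirstOrder Language Cardinal Set

universe u v w

variable {L : FirstOrder.Language.{u, v}}

/-- A complete theory: a satisfiable set of sentences containing each sentence or its
negation (`Theory.IsMaximal` in Mathlib). -/
abbrev CTheory (L : FirstOrder.Language.{u, v}) : Type max u v :=
  {T : L.Theory // T.IsMaximal}

/-- The neighbourhood `𝒯_φ = {T ∈ 𝒯 | φ ∈ T}`. -/
def nbhd (𝒯 : Set (CTheory L)) (φ : L.Sentence) : Set (CTheory L) :=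
  {T | T ∈ 𝒯 ∧ φ ∈ T.1}

/-- `T` is an accumulation point of `𝒯` if for every sentence `φ ∈ T` the set `𝒯_φ` is
infinite. -/
def IsAccPoint (𝒯 : Set (CTheory L)) (T : CTheory L) : Prop :=
  ∀ φ : L.Sentence, φ ∈ T.1 → (nbhd 𝒯 φ).Infinite

/-- The `E`-closure of `𝒯`: `𝒯` together with all its accumulation points. -/
def ClE (𝒯 : Set (CTheory L)) : Set (CTheory L) :=
  𝒯 ∪ {T | IsAccPoint 𝒯 T}

/-- The `e`-spectrum of `𝒯`: the cardinality of the set of accumulation points of `𝒯`. -/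
noncomputable def eSp (𝒯 : Set (CTheory L)) : Cardinal :=
  Cardinal.mk {T : CTheory L // IsAccPoint 𝒯 T}

/-- Two sentences are inconsistent if `{φ, ψ}` is unsatisfiable. -/
def Inconsistent (φ ψ : L.Sentence) : Prop :=
  ¬ FirstOrder.Language.Theory.IsSatisfiable ({φ, ψ} : L.Theory)

open Classical in
/-- `RSge α 𝒯` says `RS(𝒯) ≥ α`: `RS(𝒯) ≥ 0` iff `𝒯 ≠ ∅`; `RS(𝒯) ≥ 1` iff `𝒯` is infinite;
for `β ≥ 1`, `RS(𝒯) ≥ β + 1` iff there are pairwise inconsistent sentences `φ_n`, `n ∈ ℕ`,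
with `RS(𝒯_{φ_n}) ≥ β` for all `n`; for limit `λ`, `RS(𝒯) ≥ λ` iff `RS(𝒯) ≥ β` for all
`β < λ`. -/
noncomputable def RSge (α : Ordinal.{w}) : Set (CTheory L) → Prop :=
  @Ordinal.limitRecOn (fun _ => Set (CTheory L) → Prop) α
    (fun 𝒯 => 𝒯.Nonempty)
    (fun β ih 𝒯 =>
      if β = 0 then 𝒯.Infinite
      else ∃ φ : ℕ → L.Sentence,
        (∀ m n : ℕ, m ≠ n → Inconsistent (φ m) (φ n)) ∧ ∀ k : ℕ, ih (nbhd 𝒯 (φ k)))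
    (fun β _ ih 𝒯 => ∀ γ : Ordinal, ∀ h : γ < β, ih γ h 𝒯)

/-- `RS(𝒯) = α` for an ordinal `α`: `RS(𝒯) ≥ α` but not `RS(𝒯) ≥ α + 1`. -/
def RSeq (𝒯 : Set (CTheory L)) (α : Ordinal.{w}) : Prop :=
  RSge α 𝒯 ∧ ¬ RSge (α + 1) 𝒯

/-- `RS(𝒯) = ∞`: `RS(𝒯) ≥ α` for every ordinal `α`. -/
def RSinf (𝒯 : Set (CTheory L)) : Prop :=
  ∀ α : Ordinal.{w}, RSge α 𝒯

/-- `ds(𝒯) = n` (relative to `RS(𝒯) = α`): `n` is the largest natural number for which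
there exist `n` pairwise inconsistent sentences `φ_1, …, φ_n` with `RS(𝒯_{φ_i}) = α`. -/
def dsEq (𝒯 : Set (CTheory L)) (α : Ordinal.{w}) (n : ℕ) : Prop :=
  IsGreatest {m : ℕ | ∃ φ : Fin m → L.Sentence,
    (∀ i j : Fin m, i ≠ j → Inconsistent (φ i) (φ j)) ∧
    ∀ i : Fin m, RSeq (nbhd 𝒯 (φ i)) α} n

/-- `𝒯` is `e`-minimal: for every sentence `φ`, `𝒯_φ` is finite or `𝒯_{¬φ}` is finite. -/
def EMinimal (𝒯 : Set (CTheory L)) : Prop :=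
  ∀ φ : L.Sentence, (nbhd 𝒯 φ).Finite ∨ (nbhd 𝒯 φ.not).Finite

/-- `𝒯` is `a`-minimal: `𝒯` has infinitely many accumulation points and for every sentence
`φ`, `𝒯_φ` or `𝒯_{¬φ}` has only finitely many accumulation points. -/
def AMinimal (𝒯 : Set (CTheory L)) : Prop :=
  {T : CTheory L | IsAccPoint 𝒯 T}.Infinite ∧
  ∀ φ : L.Sentence,
    {T : CTheory L | IsAccPoint (nbhd 𝒯 φ) T}.Finite ∨
    {T : CTheory L | IsAccPoint (nbhd 𝒯 φ.not) T}.Finite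

/-- `𝒯` is `α`-minimal: `RS(𝒯) = α` and for every sentence `φ`, `RS(𝒯_φ) < α` or
`RS(𝒯_{¬φ}) < α`. -/
def AlphaMinimal (𝒯 : Set (CTheory L)) (α : Ordinal.{w}) : Prop :=
  RSeq 𝒯 α ∧
  ∀ φ : L.Sentence, ¬ RSge α (nbhd 𝒯 φ) ∨ ¬ RSge α (nbhd 𝒯 φ.not)


/-!
Let `D β` be the Cantor–Bendixson derivatives of `Cl_E(𝒯)`: `D 0 = Cl_E(𝒯)`, `D (β + 1)` is the
set of points of `D β` that are accumulation points of `D β`, and limit stages are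
intersections. Every stage is E-closed. Ultrafilter limits of complete theories (compactness)
show that `RS(𝒯) ≥ β + 1` forces `D β ≠ ∅`: at a successor stage, infinitely many pairwise
inconsistent sentences produce infinitely many points of the previous stage, hence an
accumulation point; at a limit stage, a decreasing chain of nonempty E-closed sets has nonempty
intersection. If some stage is perfect, a binary tree of splitting sentences inside it produces
`2^ℵ₀` distinct limit theories. Otherwise every stage loses a point, which embeds all ordinals
into `Cl_E(𝒯)`, so `Cl_E(𝒯)` is even larger than the continuum.
-/

open Filter Function

namespace CTheory

variable {T T' : CTheory L} {φ ψ : L.Sentence}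

theorem not_mem_iff : φ.not ∈ T.1 ↔ φ ∉ T.1 :=
  ⟨fun hn h => Theory.CompleteType.false_of_mem_of_not_mem T.2.1 h hn,
    (T.2.mem_or_not_mem φ).resolve_left⟩

theorem inf_mem_iff : φ ⊓ ψ ∈ T.1 ↔ φ ∈ T.1 ∧ ψ ∈ T.1 := by
  simp only [T.2.mem_iff_models, Theory.models_sentence_iff, Sentence.realize_inf, forall_and]

theorem top_mem : (⊤ : L.Sentence) ∈ T.1 :=
  T.2.mem_of_models (Theory.models_sentence_iff.2 fun M => Sentence.realize_top M)

theorem not_inconsistent (hφ : φ ∈ T.1) (hψ : ψ ∈ T.1) : ¬ Inconsistent φ ψ :=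
  fun h => h (T.2.1.mono (insert_subset hφ (singleton_subset_iff.2 hψ)))

theorem exists_mem_not_mem_of_ne (h : T ≠ T') : ∃ χ, χ ∈ T.1 ∧ χ.not ∈ T'.1 := by
  by_contra! hsep
  simp only [not_mem_iff, not_not] at hsep
  refine h (Subtype.ext (Subset.antisymm hsep fun χ hχ => ?_))
  by_contra hχ'
  exact not_mem_iff.1 (hsep _ (not_mem_iff.2 hχ')) hχ

end CTheory

section Rank

variable {𝒮 𝒯 : Set (CTheory L)} {α β : Ordinal.{w}}

theorem RSge_zero : RSge (0 : Ordinal.{w}) 𝒮 ↔ 𝒮.Nonempty := by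
  simp only [RSge, Ordinal.limitRecOn_zero]

theorem RSge_zero_add_one : RSge (0 + 1 : Ordinal.{w}) 𝒮 ↔ 𝒮.Infinite := by
  simp only [RSge, Ordinal.limitRecOn_add_one, if_true]

theorem RSge_add_one (hβ : β ≠ 0) : RSge (β + 1) 𝒮 ↔ ∃ φ : ℕ → L.Sentence,
    (∀ m n : ℕ, m ≠ n → Inconsistent (φ m) (φ n)) ∧ ∀ k : ℕ, RSge β (nbhd 𝒮 (φ k)) := by
  simp only [RSge, Ordinal.limitRecOn_add_one, if_neg hβ]

theorem RSge_of_isSuccLimit (hα : Order.IsSuccLimit α) : RSge α 𝒮 ↔ ∀ γ < α, RSge γ 𝒮 := by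
  simp only [RSge]
  rw [Ordinal.limitRecOn_limit _ _ _ _ hα]

theorem nbhd_subset (𝒮 : Set (CTheory L)) (φ : L.Sentence) : nbhd 𝒮 φ ⊆ 𝒮 :=
  fun _ hT => hT.1

theorem nbhd_mono (h : 𝒮 ⊆ 𝒯) (φ : L.Sentence) : nbhd 𝒮 φ ⊆ nbhd 𝒯 φ :=
  fun _ hT => ⟨h hT.1, hT.2⟩

theorem RSge.mono (h : RSge β 𝒮) (hsub : 𝒮 ⊆ 𝒯) : RSge β 𝒯 := by
  induction β using Ordinal.limitRecOn generalizing 𝒮 𝒯 with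
  | zero => exact RSge_zero.2 ((RSge_zero.1 h).mono hsub)
  | add_one β ih =>
    rcases eq_or_ne β 0 with rfl | hβ
    · exact RSge_zero_add_one.2 ((RSge_zero_add_one.1 h).mono hsub)
    · obtain ⟨φ, hinc, hφ⟩ := (RSge_add_one hβ).1 h
      exact (RSge_add_one hβ).2 ⟨φ, hinc, fun k => ih (hφ k) (nbhd_mono hsub _)⟩
  | limit α hα ih =>
    exact (RSge_of_isSuccLimit hα).2
      fun γ hγ => ih γ hγ ((RSge_of_isSuccLimit hα).1 h γ hγ) hsub

theorem RSge.of_add_one (h : RSge (β + 1) 𝒮) : RSge β 𝒮 := by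
  rcases eq_or_ne β 0 with rfl | hβ
  · exact RSge_zero.2 (RSge_zero_add_one.1 h).nonempty
  · obtain ⟨φ, -, hφ⟩ := (RSge_add_one hβ).1 h
    exact (hφ 0).mono (nbhd_subset _ _)

end Rank

section Closure

variable {𝒮 𝒯 : Set (CTheory L)} {T : CTheory L}

theorem IsAccPoint.mono (h : IsAccPoint 𝒮 T) (hsub : 𝒮 ⊆ 𝒯) : IsAccPoint 𝒯 T :=
  fun φ hφ => (h φ hφ).mono (nbhd_mono hsub φ)

def IsEClosed (𝒮 : Set (CTheory L)) : Prop :=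
  ∀ T, IsAccPoint 𝒮 T → T ∈ 𝒮

theorem IsAccPoint.of_ClE (h : IsAccPoint (ClE 𝒮) T) : IsAccPoint 𝒮 T := by
  intro χ hχ
  by_cases hacc : ∃ V, IsAccPoint 𝒮 V ∧ χ ∈ V.1
  · obtain ⟨V, hV, hχV⟩ := hacc
    exact hV χ hχV
  · refine (h χ hχ).mono ?_
    rintro V ⟨hV | hV, hχV⟩
    exacts [⟨hV, hχV⟩, absurd ⟨V, hV, hχV⟩ hacc]

theorem isEClosed_ClE (𝒮 : Set (CTheory L)) : IsEClosed (ClE 𝒮) :=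
  fun _ h => Or.inr h.of_ClE

theorem ClE_mono (h : 𝒮 ⊆ 𝒯) : ClE 𝒮 ⊆ ClE 𝒯 := by
  rintro T (hT | hT)
  exacts [Or.inl (h hT), Or.inr (hT.mono h)]

theorem mem_of_mem_ClE_nbhd {φ : L.Sentence} (h : T ∈ ClE (nbhd 𝒮 φ)) : φ ∈ T.1 := by
  rcases h with h | h
  · exact h.2
  · by_contra hφ
    obtain ⟨V, hV, hφV⟩ := (h φ.not (CTheory.not_mem_iff.2 hφ)).nonempty
    exact CTheory.not_mem_iff.1 hφV hV.2

end Closure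

namespace CTheory

variable {ι : Type*} {U : Ultrafilter ι} {f : ι → CTheory L}

def ultralimit (U : Ultrafilter ι) (f : ι → CTheory L) : CTheory L :=
  ⟨{φ | ∀ᶠ i in U, φ ∈ (f i).1}, by
    refine ⟨Theory.isSatisfiable_iff_isFinitelySatisfiable.2 fun T0 hT0 => ?_,
      fun φ => U.eventually_or.1 (Eventually.of_forall fun i => (f i).2.2 φ)⟩
    obtain ⟨i, hi⟩ := ((eventually_all_finset T0).2 fun φ hφ => hT0 hφ).exists
    exact (f i).2.1.mono hi⟩

theorem isAccPoint_ultralimit {𝒮 : Set (CTheory L)} (h : ∀ᶠ i in U, IsAccPoint 𝒮 (f i)) :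
    IsAccPoint 𝒮 (ultralimit U f) := fun χ hχ =>
  let ⟨_, hi, hχi⟩ := (h.and hχ).exists
  hi χ hχi

end CTheory

theorem exists_isAccPoint_of_infinite {𝒮 : Set (CTheory L)} (h𝒮 : 𝒮.Infinite) :
    ∃ T, IsAccPoint 𝒮 T := by
  have := h𝒮.to_subtype
  refine ⟨CTheory.ultralimit (hyperfilter 𝒮) Subtype.val, fun χ hχ => ?_⟩
  have hinf : {T : 𝒮 | χ ∈ T.1.1}.Infinite := fun hfin => hfin.notMem_hyperfilter hχ
  refine (hinf.image Subtype.val_injective.injOn).mono ?_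
  rintro _ ⟨T, hT, rfl⟩
  exact ⟨T.2, hT⟩

section CantorBendixson

variable {𝒮 𝒯 : Set (CTheory L)}

noncomputable def cbDeriv (𝒮 : Set (CTheory L)) (α : Ordinal.{w}) : Set (CTheory L) :=
  Ordinal.limitRecOn α (ClE 𝒮) (fun _ D => D ∩ {T | IsAccPoint D T})
    fun β _ D => ⋂ γ, ⋂ h : γ < β, D γ h

theorem cbDeriv_zero (𝒮 : Set (CTheory L)) : cbDeriv 𝒮 0 = ClE 𝒮 := by
  simp only [cbDeriv, Ordinal.limitRecOn_zero]

theorem cbDeriv_add_one (𝒮 : Set (CTheory L)) (β : Ordinal.{w}) :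
    cbDeriv 𝒮 (β + 1) = cbDeriv 𝒮 β ∩ {T | IsAccPoint (cbDeriv 𝒮 β) T} := by
  simp only [cbDeriv, Ordinal.limitRecOn_add_one]

theorem cbDeriv_of_isSuccLimit (𝒮 : Set (CTheory L)) {α : Ordinal.{w}}
    (hα : Order.IsSuccLimit α) : cbDeriv 𝒮 α = ⋂ γ, ⋂ _ : γ < α, cbDeriv 𝒮 γ := by
  simp only [cbDeriv]
  rw [Ordinal.limitRecOn_limit _ _ _ _ hα]

theorem cbDeriv_antitone (𝒮 : Set (CTheory L)) : Antitone (cbDeriv 𝒮) := by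
  intro γ α hγα
  induction α using Ordinal.limitRecOn generalizing γ with
  | zero => rw [nonpos_iff_eq_zero.1 hγα]
  | add_one α ih =>
    rcases hγα.eq_or_lt with rfl | hlt
    · exact le_rfl
    · rw [cbDeriv_add_one]
      exact inter_subset_left.trans (ih (Order.lt_add_one_iff.1 hlt))
  | limit α hα _ =>
    rcases hγα.eq_or_lt with rfl | hlt
    · exact le_rfl
    · rw [cbDeriv_of_isSuccLimit 𝒮 hα]
      exact biInter_subset_of_mem hlt

theorem cbDeriv_subset_ClE (𝒮 : Set (CTheory L)) (α : Ordinal.{w}) : cbDeriv 𝒮 α ⊆ ClE 𝒮 :=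
  cbDeriv_zero 𝒮 ▸ cbDeriv_antitone 𝒮 (zero_le (a := α))

theorem isEClosed_cbDeriv (𝒮 : Set (CTheory L)) (α : Ordinal.{w}) : IsEClosed (cbDeriv 𝒮 α) := by
  induction α using Ordinal.limitRecOn with
  | zero => rw [cbDeriv_zero]; exact isEClosed_ClE 𝒮
  | add_one β ih =>
    rw [cbDeriv_add_one]
    intro T hT
    have hTβ : IsAccPoint (cbDeriv 𝒮 β) T := hT.mono inter_subset_left
    exact ⟨ih T hTβ, hTβ⟩
  | limit α hα ih =>
    rw [cbDeriv_of_isSuccLimit 𝒮 hα]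
    exact fun T hT => mem_iInter₂.2 fun γ hγ => ih γ hγ T (hT.mono (biInter_subset_of_mem hγ))

theorem cbDeriv_mono (hsub : 𝒮 ⊆ 𝒯) (α : Ordinal.{w}) : cbDeriv 𝒮 α ⊆ cbDeriv 𝒯 α := by
  induction α using Ordinal.limitRecOn with
  | zero => simpa only [cbDeriv_zero] using ClE_mono hsub
  | add_one β ih =>
    simp only [cbDeriv_add_one]
    exact fun T ⟨hT, hacc⟩ => ⟨ih hT, hacc.mono ih⟩
  | limit α hα ih =>
    simp only [cbDeriv_of_isSuccLimit _ hα]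
    exact iInter₂_mono fun γ hγ => ih γ hγ

theorem cbDeriv_add_one_nonempty_of_infinite {β : Ordinal.{w}} (h : (cbDeriv 𝒮 β).Infinite) :
    (cbDeriv 𝒮 (β + 1)).Nonempty := by
  obtain ⟨T, hT⟩ := exists_isAccPoint_of_infinite h
  exact ⟨T, (cbDeriv_add_one 𝒮 β).symm ▸ ⟨isEClosed_cbDeriv 𝒮 β T hT, hT⟩⟩

theorem cbDeriv_nonempty_of_isSuccLimit {α : Ordinal.{w}} (hα : Order.IsSuccLimit α)
    (h : ∀ γ < α, (cbDeriv 𝒮 γ).Nonempty) : (cbDeriv 𝒮 α).Nonempty := by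
  choose T hT using fun γ : Iio α => h γ γ.2
  have : Nonempty (Iio α) := ⟨⟨0, hα.bot_lt⟩⟩
  refine ⟨CTheory.ultralimit (Ultrafilter.of atTop) T,
    (cbDeriv_of_isSuccLimit 𝒮 hα).symm ▸ mem_iInter₂.2 fun γ hγ => ?_⟩
  refine isEClosed_cbDeriv 𝒮 γ _ (CTheory.isAccPoint_ultralimit ?_)
  -- every later stage `δ ≥ γ + 1` consists of accumulation points of stage `γ`
  have hlater : ∀ᶠ δ : Iio α in (Ultrafilter.of atTop : Ultrafilter (Iio α)),
      ⟨γ + 1, hα.add_one_lt hγ⟩ ≤ δ :=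
    Ultrafilter.of_le atTop (eventually_ge_atTop _)
  refine hlater.mono fun δ hδ => ?_
  have hTδ := cbDeriv_antitone 𝒮 hδ (hT δ)
  rw [cbDeriv_add_one] at hTδ
  exact hTδ.2

theorem cbDeriv_nonempty_of_RSge {β : Ordinal.{w}} (h : RSge (β + 1) 𝒮) :
    (cbDeriv 𝒮 β).Nonempty := by
  induction β using Ordinal.limitRecOn generalizing 𝒮 with
  | zero =>
    rw [cbDeriv_zero]
    exact (RSge_zero_add_one.1 h).nonempty.mono fun T hT => Or.inl hT
  | add_one γ ih =>
    obtain ⟨φ, hinc, hφ⟩ := (RSge_add_one (add_pos_of_right zero_lt_one γ).ne').1 h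
    choose T hT using fun k => ih (hφ k)
    have hTφ : ∀ k, φ k ∈ (T k).1 := fun k => mem_of_mem_ClE_nbhd (cbDeriv_subset_ClE _ γ (hT k))
    have hinj : Injective T := fun m n hmn => by
      by_contra hne
      exact (T m).not_inconsistent (hTφ m) (hmn ▸ hTφ n) (hinc m n hne)
    refine cbDeriv_add_one_nonempty_of_infinite ((infinite_range_of_injective hinj).mono ?_)
    rintro _ ⟨k, rfl⟩
    exact cbDeriv_mono (nbhd_subset 𝒮 (φ k)) γ (hT k)
  | limit α hα ih =>
    have hα' := h.of_add_one
    exact cbDeriv_nonempty_of_isSuccLimit hα fun γ hγ =>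
      ih γ hγ ((RSge_of_isSuccLimit hα).1 hα' _ (hα.add_one_lt hγ))

end CantorBendixson

section Perfect

def treeNode {α : Type*} (split : α → Bool → α) (a : α) (b : ℕ → Bool) : ℕ → α
  | 0 => a
  | n + 1 => split (treeNode split a b n) (b n)

theorem treeNode_eq_of_eqOn {α : Type*} {split : α → Bool → α} {a : α} {b b' : ℕ → Bool}
    {n : ℕ} (h : ∀ m < n, b m = b' m) : treeNode split a b n = treeNode split a b' n := by
  induction n with
  | zero => rfl
  | succ n ih =>
    simp only [treeNode, h n n.lt_succ_self, ih fun m hm => h m (hm.trans n.lt_succ_self)]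

theorem exists_treeNode_eq_of_ne {α : Type*} (split : α → Bool → α) (a : α) {b b' : ℕ → Bool}
    (h : b ≠ b') : ∃ n, treeNode split a b n = treeNode split a b' n ∧ b n ≠ b' n := by
  have hex : ∃ n, b n ≠ b' n := by simpa only [ne_eq, funext_iff, not_forall] using h
  exact ⟨Nat.find hex, treeNode_eq_of_eqOn fun m hm => not_not.1 (Nat.find_min hex hm),
    Nat.find_spec hex⟩

variable {P : Set (CTheory L)}

theorem exists_split_of_perfect (hP : ∀ T ∈ P, IsAccPoint P T) {φ : L.Sentence}
    (hφ : (nbhd P φ).Nonempty) :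
    ∃ χ, (nbhd P (φ ⊓ χ)).Nonempty ∧ (nbhd P (φ ⊓ χ.not)).Nonempty := by
  obtain ⟨T, hT⟩ := hφ
  obtain ⟨A, hA, B, hB, hAB⟩ := (hP T hT.1 φ hT.2).nontrivial
  obtain ⟨χ, hχA, hχB⟩ := CTheory.exists_mem_not_mem_of_ne hAB
  exact ⟨χ, ⟨A, hA.1, CTheory.inf_mem_iff.2 ⟨hA.2, hχA⟩⟩,
    ⟨B, hB.1, CTheory.inf_mem_iff.2 ⟨hB.2, hχB⟩⟩⟩

structure Splitting (P : Set (CTheory L)) where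
  split : L.Sentence → Bool → L.Sentence
  mem_of_mem_split : ∀ φ c (T : CTheory L), split φ c ∈ T.1 → φ ∈ T.1
  not_mem_split_of_ne : ∀ φ {c c'} (T : CTheory L), c ≠ c' → split φ c ∈ T.1 → split φ c' ∉ T.1
  nonempty_split : ∀ φ c, (nbhd P φ).Nonempty → (nbhd P (split φ c)).Nonempty

theorem nonempty_splitting_of_perfect (hP : ∀ T ∈ P, IsAccPoint P T) : Nonempty (Splitting P) := by
  choose! χ hχ using fun φ => exists_split_of_perfect hP (φ := φ)
  have key : ∀ φ (T : CTheory L), φ ⊓ χ φ ∈ T.1 → φ ⊓ (χ φ).not ∉ T.1 := fun φ T h h' =>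
    CTheory.not_mem_iff.1 (CTheory.inf_mem_iff.1 h').2 (CTheory.inf_mem_iff.1 h).2
  refine ⟨⟨fun φ c => bif c then φ ⊓ χ φ else φ ⊓ (χ φ).not, ?_, ?_, ?_⟩⟩
  · intro φ c T h
    cases c <;> exact (CTheory.inf_mem_iff.1 h).1
  · intro φ c c' T hcc'
    cases c <;> cases c' <;> first | exact absurd rfl hcc' | exact key φ T | exact flip (key φ T)
  · intro φ c hφ
    cases c
    exacts [(hχ φ hφ).2, (hχ φ hφ).1]

theorem Splitting.exists_injective_isAccPoint (s : Splitting P) (hne : P.Nonempty)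
    (hP : ∀ T ∈ P, IsAccPoint P T) :
    ∃ g : (ℕ → Bool) → CTheory L, Injective g ∧ ∀ b, IsAccPoint P (g b) := by
  let node := treeNode s.split ⊤
  have hnode : ∀ b n, (nbhd P (node b n)).Nonempty := by
    intro b n
    induction n with
    | zero => exact hne.elim fun T hT => ⟨T, hT, CTheory.top_mem⟩
    | succ n ih => exact s.nonempty_split _ _ ih
  have hnode_anti : ∀ b {m n} (T : CTheory L), m ≤ n → node b n ∈ T.1 → node b m ∈ T.1 := by
    intro b m n T hmn
    induction n, hmn using Nat.le_induction with
    | base => exact id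
    | succ n _ ih => exact fun h => ih (s.mem_of_mem_split _ _ T h)
  choose S hS using hnode
  let limit (b : ℕ → Bool) := CTheory.ultralimit (hyperfilter ℕ) (S b)
  have hlimit : ∀ b n, node b n ∈ (limit b).1 := fun b n =>
    Nat.hyperfilter_le_atTop ((eventually_ge_atTop n).mono fun k hk =>
      hnode_anti b (S b k) hk (hS b k).2)
  refine ⟨limit, fun b b' hbb' => ?_,
    fun b => CTheory.isAccPoint_ultralimit (Eventually.of_forall fun n => hP _ (hS b n).1)⟩
  by_contra hne
  obtain ⟨n, hnode_eq, hbn⟩ := exists_treeNode_eq_of_ne s.split ⊤ hne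
  have h := hlimit b (n + 1)
  have h' := hlimit b' (n + 1)
  simp only [node, treeNode, hnode_eq, hbb'] at h h'
  exact s.not_mem_split_of_ne _ _ hbn h h'

end Perfect

theorem injective_of_not_isAccPoint_cbDeriv {𝒮 : Set (CTheory L)} {x : Ordinal.{w} → CTheory L}
    (hx : ∀ β, x β ∈ cbDeriv 𝒮 β) (hxacc : ∀ β, ¬ IsAccPoint (cbDeriv 𝒮 β) (x β)) :
    Injective x := by
  refine Injective.of_lt_imp_ne fun β γ hβγ hxβγ => hxacc β ?_
  have hxγ := cbDeriv_antitone 𝒮 (Order.add_one_le_of_lt hβγ) (hx γ)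
  rw [cbDeriv_add_one, ← hxβγ] at hxγ
  exact hxγ.2

theorem continuum_le_mk_of_injective_nat_bool {α : Type*} {f : (ℕ → Bool) → α}
    (hf : Injective f) : 𝔠 ≤ #α := by
  simpa [mk_arrow] using lift_mk_le_lift_mk_of_injective hf

theorem continuum_le_mk_of_injective_ordinal.{z} {α : Type z} {f : Ordinal.{w} → α}
    (hf : Injective f) : 𝔠 ≤ #α := by
  have h := lift_mk_le_lift_mk_of_injective hf
  rw [mk_ordinal, lift_univ] at h
  rw [← continuum_le_lift.{z, w + 1}, ← lift_continuum.{max (w + 1) z, w}]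
  exact (lift_lt_univ' 𝔠).le.trans h

/-- Proposition 4.1: if `RS(𝒯) = ∞` then `|Cl_E(𝒯)| ≥ 2^ℵ₀`. -/
theorem continuum_le_clE_of_rank_infty (𝒯 : Set (CTheory L)) (h : (∀ α : Ordinal.{w}, RSge α 𝒯)) :
    (2 : Cardinal) ^ Cardinal.aleph0 ≤ Cardinal.mk ↥(ClE 𝒯) := by
  rw [two_power_aleph0]
  by_cases hperf : ∃ β : Ordinal.{w}, ∀ T ∈ cbDeriv 𝒯 β, IsAccPoint (cbDeriv 𝒯 β) T
  · obtain ⟨β, hβ⟩ := hperf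
    obtain ⟨s⟩ := nonempty_splitting_of_perfect hβ
    obtain ⟨g, hg, hgacc⟩ := s.exists_injective_isAccPoint (cbDeriv_nonempty_of_RSge (h (β + 1))) hβ
    have hgD : ∀ b, g b ∈ ClE 𝒯 := fun b =>
      cbDeriv_subset_ClE 𝒯 β (isEClosed_cbDeriv 𝒯 β _ (hgacc b))
    exact continuum_le_mk_of_injective_nat_bool (f := fun b => ⟨g b, hgD b⟩)
      fun b b' hbb' => hg (congrArg Subtype.val hbb')
  · push Not at hperf
    choose x hx hxacc using hperf
    exact continuum_le_mk_of_injective_ordinal (f := fun β => ⟨x β, cbDeriv_subset_ClE 𝒯 β (hx β)⟩)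
      fun β γ hβγ => injective_of_not_isAccPoint_cbDeriv hx hxacc (congrArg Subtype.val hβγ)
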